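/- arXiv:0911.2255 — 2 statements merged into one kernel-verified Lean document; each statement's English description precedes it below -/
import Mathlib

section
/- For a 2×2 quaternionic Hermitian matrix X = ![![p, conj a], ![a, m]] with p, m ∈ ℝ and a ∈ ℍ, the quantity det X := p·m − |a|² equals the Lorentzian norm of the corresponding vector in ℝ^{5+1}; moreover det is invariant under X ↦ M X Mᴴ whenever M is a complex matrix (entries in a fixed complex subalgebra of ℍ) with det M = ±1. -/
/-!
Write `a = z + w j` with `z, w` complex. Conjugating by a complex matrix `M` acts on the complex
part of `X = ![![p, conj a], ![a, m]]` as on a complex Hermitian matrix, multiplying its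
determinant `p m - |z|²` by `|det M|²`, while the `j`-part `w J j` (with `J = ![![0, -1], ![1, 0]]`)
becomes `w (M J Mᵀ) j = w (det M) J j`, since `j c = conj c j` for complex `c`; so `|w|²` is
multiplied by `|det M|²` as well. Hence the quaternionic determinant scales by `|det M|² = 1`.
-/

open Matrix Quaternion

noncomputable def hermDet (X : Matrix (Fin 2) (Fin 2) ℍ) : ℍ :=
  X 0 0 * X 1 1 - star (X 1 0) * X 1 0

theorem hermDet_of_hermitian (p m : ℝ) (a : ℍ) :
    hermDet !![(p : ℍ), star a; a, (m : ℍ)] = ((p * m - ‖a‖ ^ 2 : ℝ) : ℍ) := by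
  simp [hermDet, star_mul_self, normSq_eq_norm_mul_self, sq]

set_option maxHeartbeats 1000000 in
theorem hermDet_map_mul_mul_conjTranspose (N : Matrix (Fin 2) (Fin 2) ℂ) (p m : ℝ) (a : ℍ) :
    hermDet (N.map (↑) * !![(p : ℍ), star a; a, (m : ℍ)] * (N.map (↑))ᴴ)
      = (Complex.normSq N.det : ℍ) * hermDet !![(p : ℍ), star a; a, (m : ℍ)] := by
  simp only [hermDet, mul_apply, Fin.sum_univ_two, conjTranspose_apply, map_apply, of_apply,
    cons_val', cons_val_zero, cons_val_one, empty_val', cons_val_fin_one, det_fin_two]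
  ext <;> simp [Complex.normSq_apply] <;> ring

theorem exists_coeComplex_eq_of_mem_span {q : ℍ}
    (hq : q ∈ Submodule.span ℝ ({1, ⟨0, 1, 0, 0⟩} : Set ℍ)) : ∃ z : ℂ, (z : ℍ) = q := by
  have hI : (⟨0, 1, 0, 0⟩ : ℍ) = ofComplex Complex.I := by ext <;> simp
  rw [hI, ← map_one ofComplex] at hq
  obtain ⟨x, y, rfl⟩ := Submodule.mem_span_pair.mp hq
  exact ⟨x • 1 + y • Complex.I, by simp only [← coe_ofComplex, map_add, map_smul]⟩

theorem exists_map_coeComplex_eq_of_mem_span {ι κ : Type*} {M : Matrix ι κ ℍ}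
    (hM : ∀ i j, M i j ∈ Submodule.span ℝ ({1, ⟨0, 1, 0, 0⟩} : Set ℍ)) :
    ∃ N : Matrix ι κ ℂ, N.map (↑) = M := by
  choose N hN using fun i j => exists_coeComplex_eq_of_mem_span (hM i j)
  exact ⟨of N, Matrix.ext hN⟩

theorem quaternionic_det_lorentzian_and_invariant
    (p m : ℝ) (a : Quaternion ℝ)
    (M : Matrix (Fin 2) (Fin 2) (Quaternion ℝ))
    (hM : ∀ i j, M i j ∈ Submodule.span ℝ ({1, ⟨0, 1, 0, 0⟩} : Set (Quaternion ℝ)))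
    (hdet : M 0 0 * M 1 1 - M 0 1 * M 1 0 = 1 ∨ M 0 0 * M 1 1 - M 0 1 * M 1 0 = -1) :
    p * m - ‖a‖ ^ 2 = ((p + m) / 2) ^ 2 - ((p - m) / 2) ^ 2 - ‖a‖ ^ 2 ∧
    (let Y := M * !![(p : Quaternion ℝ), star a; a, (m : Quaternion ℝ)] * Mᴴ
     Y 0 0 * Y 1 1 - star (Y 1 0) * Y 1 0 = ((p * m - ‖a‖ ^ 2 : ℝ) : Quaternion ℝ)) := by
  obtain ⟨N, rfl⟩ := exists_map_coeComplex_eq_of_mem_span hM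
  have hdetN : N.det = 1 ∨ N.det = -1 := by
    have hinj : Function.Injective ofComplex := ofComplex.toRingHom.injective
    rw [← hinj.eq_iff, ← hinj.eq_iff, map_neg, map_one, det_fin_two, map_sub, map_mul, map_mul]
    exact hdet
  have hnormSq : Complex.normSq N.det = 1 := by rcases hdetN with h | h <;> simp [h]
  refine ⟨by ring, ?_⟩
  change hermDet _ = _
  rw [hermDet_map_mul_mul_conjTranspose, hermDet_of_hermitian, hnormSq, ← coe_mul, one_mul]
end

section
/- For 3×3 complex Hermitian matrices, define the Freudenthal product X ∗ Y = X∘Y − ½(X·tr(Y) + Y·tr(X)) − ½(tr(X∘Y) − tr(X)tr(Y))·I, where X∘Y = (XY+YX)/2. Then tr((X ∗ X) ∘ X) = 3·det X. -/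
/-!
The adjugate of a 3×3 matrix is, by Cayley–Hamilton, `X² - tr X • X + ½((tr X)² - tr X²) • I`,
which is exactly the Freudenthal square `X ∗ X`. Since `adj X * X = X * adj X = det X • I`,
the Jordan product `(X ∗ X) ∘ X` is `det X • I`, whose trace is `3 det X`.
-/

open Matrix

/-- The Jordan product on 3×3 complex matrices. -/
noncomputable def jmul (X Y : Matrix (Fin 3) (Fin 3) ℂ) : Matrix (Fin 3) (Fin 3) ℂ :=
  (1 / 2 : ℂ) • (X * Y + Y * X)

/-- The Freudenthal product on 3×3 complex matrices. -/
noncomputable def freudenthal (X Y : Matrix (Fin 3) (Fin 3) ℂ) : Matrix (Fin 3) (Fin 3) ℂ :=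
  jmul X Y - (1 / 2 : ℂ) • (Y.trace • X + X.trace • Y)
    - (1 / 2 : ℂ) • (((jmul X Y).trace - X.trace * Y.trace) • (1 : Matrix (Fin 3) (Fin 3) ℂ))

-- Doubled, so that no `½` is needed and the identity holds over every commutative ring.
theorem Matrix.two_smul_adjugate_fin_three {R : Type*} [CommRing R]
    (A : Matrix (Fin 3) (Fin 3) R) :
    (2 : R) • adjugate A =
      (2 : R) • (A * A) - (2 * A.trace) • A + (A.trace ^ 2 - (A * A).trace) • 1 := by
  ext i j
  fin_cases i <;> fin_cases j <;>
    simp [adjugate_fin_three, trace_fin_three, mul_apply, Fin.sum_univ_three] <;> ring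

theorem jmul_self (X : Matrix (Fin 3) (Fin 3) ℂ) : jmul X X = X * X := by
  rw [jmul, ← two_smul ℂ (X * X), smul_smul]
  norm_num

theorem freudenthal_self_eq_adjugate (X : Matrix (Fin 3) (Fin 3) ℂ) :
    freudenthal X X = adjugate X := by
  refine smul_right_injective _ (two_ne_zero (α := ℂ)) ?_
  beta_reduce
  rw [two_smul_adjugate_fin_three, freudenthal, jmul_self]
  module

theorem jmul_adjugate_self (X : Matrix (Fin 3) (Fin 3) ℂ) :
    jmul (adjugate X) X = X.det • 1 := by
  rw [jmul, adjugate_mul, mul_adjugate, ← two_smul ℂ, smul_smul]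
  norm_num

theorem trace_triple_eq_three_det_general
    (X : Matrix (Fin 3) (Fin 3) ℂ) :
    (jmul (freudenthal X X) X).trace = 3 * X.det := by
  rw [freudenthal_self_eq_adjugate, jmul_adjugate_self, trace_smul, trace_one]
  simp [mul_comm]

theorem trace_triple_eq_three_det
    (X : Matrix (Fin 3) (Fin 3) ℂ) (hX : X.IsHermitian) :
    (jmul (freudenthal X X) X).trace = 3 * X.det :=
  trace_triple_eq_three_det_general X
end
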